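/- arXiv:1506.04406 — 2 statements merged into one kernel-verified Lean document; each statement's English description precedes it below -/
import Mathlib

section
/- Let σ < π be permutations and let S ⊆ Ê^{σ,π} with |S| > 1. Then the Möbius function of the finite poset ⋂_{η∈S} P(η)° equals −1 if S ∈ EZ^{σ,π}, and equals 0 otherwise. -/
open scoped Classical

set_option maxHeartbeats 1000000

/-! ## The permutation pattern poset -/

/-- The type of all (finite) permutations: a permutation of length `n` is an element of
`Equiv.Perm (Fin n)`; the letter in position `i` is `p.2 i` (letters compared via the
order on `Fin n`). -/
abbrev PermPat : Type := Σ n : ℕ, Equiv.Perm (Fin n)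

/-- Pattern containment: `PatLe σ π` iff `π` has a subsequence in the same relative order
as `σ`, i.e. there is an occurrence of `σ` in `π`. -/
def PatLe (p q : PermPat) : Prop :=
  ∃ f : Fin p.1 ↪o Fin q.1, ∀ i j : Fin p.1, p.2 i < p.2 j ↔ q.2 (f i) < q.2 (f j)

lemma patLe_refl (p : PermPat) : PatLe p p := by
  refine ⟨(OrderIso.refl (Fin p.1)).toOrderEmbedding, fun i j => ?_⟩
  simp

lemma patLe_trans {p q r : PermPat} (h1 : PatLe p q) (h2 : PatLe q r) : PatLe p r := by
  obtain ⟨f, hf⟩ := h1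
  obtain ⟨g, hg⟩ := h2
  exact ⟨f.trans g, fun i j => (hf i j).trans (hg (f i) (f j))⟩

lemma PatLe.len_le {p q : PermPat} (h : PatLe p q) : p.1 ≤ q.1 := by
  obtain ⟨f, -⟩ := h
  simpa using Fintype.card_le_of_embedding f.toEmbedding

lemma StrictMono.fin_apply_eq {n : ℕ} {f : Fin n → Fin n} (hf : StrictMono f) (i : Fin n) :
    f i = i := by
  have hle : ∀ m : ℕ, ∀ j : Fin n, j.val = m → j.val ≤ (f j).val := by
    intro m
    induction m with
    | zero => intro j hj; omega
    | succ m ih =>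
      intro j hj
      have hm : m < n := by omega
      have h1 : f ⟨m, hm⟩ < f j := hf (by simp [Fin.lt_def]; omega)
      have h2 := ih ⟨m, hm⟩ rfl
      simp only [Fin.lt_def] at h1
      simp only [Fin.val_mk] at h1 h2
      omega
  have hge : ∀ m : ℕ, ∀ j : Fin n, j.val + m + 1 = n → (f j).val ≤ j.val := by
    intro m
    induction m with
    | zero => intro j hj; have := (f j).isLt; omega
    | succ m ih =>
      intro j hj
      have hs : j.val + 1 < n := by omega
      have h1 : f j < f ⟨j.val + 1, hs⟩ := hf (by simp [Fin.lt_def])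
      have h2 := ih ⟨j.val + 1, hs⟩ (by simp only [Fin.val_mk]; omega)
      simp only [Fin.lt_def] at h1
      simp only [Fin.val_mk] at h1 h2
      omega
  exact Fin.ext (le_antisymm (hge (n - 1 - i.val) i (by have := i.isLt; omega)) (hle i.val i rfl))

lemma patLe_antisymm {p q : PermPat} (hpq : PatLe p q) (hqp : PatLe q p) : p = q := by
  obtain ⟨k, σ⟩ := p
  obtain ⟨n, π⟩ := q
  have hkn : k = n := le_antisymm hpq.len_le hqp.len_le
  subst hkn
  obtain ⟨f, hf⟩ := hpq
  have hfid : ∀ i, f i = i := fun i => f.strictMono.fin_apply_eq i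
  have key : ∀ i j : Fin k, σ i < σ j ↔ π i < π j := by
    intro i j
    simpa [hfid] using hf i j
  have hmono : StrictMono (fun a => π (σ.symm a)) := by
    intro a b hab
    have : σ (σ.symm a) < σ (σ.symm b) := by simpa using hab
    exact (key _ _).mp this
  have hid : ∀ a, π (σ.symm a) = a := fun a => hmono.fin_apply_eq a
  have hσπ : σ = π := by
    apply Equiv.ext
    intro x
    have := hid (σ x)
    simpa using this.symm
  rw [hσπ]

/-- The permutation pattern poset `𝒫`. -/
instance : PartialOrder PermPat where
  le := PatLe
  le_refl := patLe_refl
  le_trans _ _ _ := patLe_trans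
  le_antisymm _ _ := patLe_antisymm

lemma PermPat.le_def {p q : PermPat} : p ≤ q ↔ PatLe p q := Iff.rfl

/-! ## The Möbius function of the pattern poset

`permMu` is the Möbius function of the pattern poset: `μ(σ,σ) = 1`,
`μ(σ,π) = -∑_{σ ≤ z < π} μ(σ,z)` for `σ < π`, and `μ(σ,π) = 0` if `σ ≰ π`.
(Every `z < π` is of length strictly smaller than `π`, so the inner sum ranges over
the permutations of each length `m < |π|`.) -/
noncomputable def permMu (p q : PermPat) : ℤ :=
  if p = q then 1
  else if PatLe p q then
    - ∑ m : Fin q.1, ∑ z : Equiv.Perm (Fin m.1),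
        if PatLe p ⟨m.1, z⟩ ∧ PatLe ⟨m.1, z⟩ q then permMu p ⟨m.1, z⟩ else 0
  else 0
termination_by q.1
decreasing_by exact m.isLt

/-! ## The Möbius function of a finite poset -/

/-- The Möbius function `μ(a,b)` of a finite poset. -/
noncomputable def muPair {X : Type*} [PartialOrder X] [Fintype X] (a b : X) : ℤ :=
  if a = b then 1
  else if a ≤ b then
    - ∑ z ∈ (Finset.univ.filter fun z : X => a ≤ z ∧ z < b).attach, muPair a z.1
  else 0
termination_by Set.ncard {z : X | z < b}
decreasing_by
  rename_i z
  have hz : z.1 < b := ((Finset.mem_filter.mp z.2).2).2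
  exact Set.ncard_lt_ncard
    ((Set.ssubset_iff_of_subset (fun w hw => lt_trans hw hz)).mpr ⟨z.1, hz, fun hmem => absurd hmem (by exact lt_irrefl _)⟩)
    (Set.toFinite _)

instance instFiniteOption' {α : Type*} [Finite α] : Finite (Option α) :=
  Finite.of_equiv (α ⊕ PUnit.{1}) (Equiv.optionEquivSumPUnit.{0} α).symm
instance {α : Type*} [Finite α] : Finite (WithTop α) := inferInstanceAs (Finite (Option α))
instance {α : Type*} [Finite α] : Finite (WithBot α) := inferInstanceAs (Finite (Option α))
instance {α : Type*} [Fintype α] : Fintype (WithTop α) := inferInstanceAs (Fintype (Option α))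
instance {α : Type*} [Fintype α] : Fintype (WithBot α) := inferInstanceAs (Fintype (Option α))

/-- For a finite poset `X`, `muHat X` is `μ(0̂,1̂)` computed in the poset obtained from `X`
by adjoining a new bottom element `0̂` and a new top element `1̂`.  (For infinite `X` the
junk value `0` is returned.) -/
noncomputable def muHat (X : Type*) [PartialOrder X] : ℤ :=
  if h : Finite X then
    letI := h
    letI : Fintype (WithBot (WithTop X)) := Fintype.ofFinite _
    muPair (⊥ : WithBot (WithTop X)) ⊤
  else 0

/-! ## Adjacencies, embeddings, normality -/

/-- The position one step before `j` (or `j` itself when `j = 0`). -/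
def prevPos {n : ℕ} (j : Fin n) : Fin n := ⟨j.val - 1, lt_of_le_of_lt (Nat.sub_le _ _) j.isLt⟩

/-- `Linked π j` says position `j` is linked to the preceding position, i.e. the letters in
positions `j-1, j` have consecutive values.  These are exactly the positions lying in the
tail of some adjacency of `π` (an adjacency is a maximal factor of consecutively valued
increasing or decreasing letters; its tail is all but its first letter). -/
def Linked {n : ℕ} (π : Equiv.Perm (Fin n)) (j : Fin n) : Prop :=
  0 < j.val ∧ ((π j).val + 1 = (π (prevPos j)).val ∨ (π (prevPos j)).val + 1 = (π j).val)

/-- The number of adjacencies (maximal linked runs) of `π`. -/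
noncomputable def numBlocks {n : ℕ} (π : Equiv.Perm (Fin n)) : ℕ :=
  (Finset.univ.filter fun j : Fin n => ¬ Linked π j).card

/-- The index (starting from 0) of the adjacency of `π` containing position `j`. -/
noncomputable def blockIdx {n : ℕ} (π : Equiv.Perm (Fin n)) (j : Fin n) : ℕ :=
  (Finset.univ.filter fun m : Fin n => ¬ Linked π m ∧ m ≤ j).card - 1

/-- The set of positions in the `i`-th adjacency of `π`. -/
noncomputable def blockF {n : ℕ} (π : Equiv.Perm (Fin n)) (i : ℕ) : Finset (Fin n) :=
  Finset.univ.filter fun j => blockIdx π j = i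

/-- The standardization of an injective tuple `v` of values in `Fin n`: the permutation of
`Fin m` whose letters are in the same relative order as `v`. -/
noncomputable def stdize {m n : ℕ} (v : Fin m → Fin n) (hv : Function.Injective v) :
    Equiv.Perm (Fin m) :=
  (Equiv.ofInjective v hv).trans
    (monoEquivOfFin (Set.range v)
      (by rw [Set.card_range_of_injective hv, Fintype.card_fin])).symm.toEquiv

/-- The pattern (as an abstract permutation) formed by the letters of `π` in the set `E`
of positions. -/
noncomputable def patternOf {n : ℕ} (π : Equiv.Perm (Fin n)) (E : Finset (Fin n)) : PermPat :=
  ⟨E.card, stdize (fun i => π ((E.orderIsoOfFin rfl) i))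
    (by
      intro i j hij
      exact (E.orderIsoOfFin rfl).injective (Subtype.coe_injective (π.injective hij)))⟩

/-- `E` is (the set of positions of the nonzero entries of) an embedding of `p` in `π`:
the letters of `π` in positions `E` form an occurrence of `p`. -/
def IsEmb (p : PermPat) {n : ℕ} (π : Equiv.Perm (Fin n)) (E : Finset (Fin n)) : Prop :=
  patternOf π E = p

/-- An embedding (given by its set `E` of nonzero positions) is normal if every position in
the tail of an adjacency of `π` is nonzero. -/
def IsNormal {n : ℕ} (π : Equiv.Perm (Fin n)) (E : Finset (Fin n)) : Prop :=
  ∀ j, Linked π j → j ∈ E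

/-- `NE p π`: the number of normal embeddings of `p` in `π`. -/
noncomputable def NE (p : PermPat) {n : ℕ} (π : Equiv.Perm (Fin n)) : ℕ :=
  Set.ncard {E : Finset (Fin n) | IsEmb p π E ∧ IsNormal π E}

/-- An embedding is rightmost if, within each adjacency of `π`, all of its zero entries
precede all of its nonzero entries. -/
def IsRightmost {n : ℕ} (π : Equiv.Perm (Fin n)) (E : Finset (Fin n)) : Prop :=
  ∀ i j : Fin n, blockIdx π i = blockIdx π j → i ≤ j → i ∈ E → j ∈ E

/-- Membership in `Ê^{p,π}`, the set of rightmost embeddings of `p` in `π`. -/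
def EhatMem (p : PermPat) {n : ℕ} (π : Equiv.Perm (Fin n)) (E : Finset (Fin n)) : Prop :=
  IsEmb p π E ∧ IsRightmost π E

/-- Membership in `EZ^{p,π}`: `S` is a nonempty set of rightmost embeddings of `p` in `π`
whose zero sets have empty intersection (every position is nonzero in some member). -/
def EZmem (p : PermPat) {n : ℕ} (π : Equiv.Perm (Fin n)) (S : Finset (Finset (Fin n))) : Prop :=
  S.Nonempty ∧ (∀ E ∈ S, EhatMem p π E) ∧ ∀ j : Fin n, ∃ E ∈ S, j ∈ E

/-- The sum `∑_{S ∈ EZ^{p,π}} (-1)^{|S|}`. -/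
noncomputable def EZsum (p : PermPat) {n : ℕ} (π : Equiv.Perm (Fin n)) : ℤ :=
  ∑ S ∈ Finset.univ.filter (fun S : Finset (Finset (Fin n)) => EZmem p π S), (-1 : ℤ) ^ S.card

/-! ## The adjacency decomposition and the posets `P(η)`, `A^{σ,π}` -/

/-- `π̂`, the adjacency decomposition of `π`, as a tuple of permutations. -/
noncomputable def Phat {n : ℕ} (π : Equiv.Perm (Fin n)) : Fin (numBlocks π) → PermPat :=
  fun i => patternOf π (blockF π i.val)

/-- `η̂`, the decomposition of an embedding (with nonzero positions `E`) along the
adjacencies of `π`. -/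
noncomputable def etaHat {n : ℕ} (π : Equiv.Perm (Fin n)) (E : Finset (Fin n)) :
    Fin (numBlocks π) → PermPat :=
  fun i => patternOf π (E.filter fun j => blockIdx π j = i.val)

/-- The product poset `P(η) = [η̂_1,π̂_1] × ⋯ × [η̂_t,π̂_t]`, as a subset of the product of
copies of the pattern poset indexed by the adjacencies of `π`. -/
noncomputable def Pemb {n : ℕ} (π : Equiv.Perm (Fin n)) (E : Finset (Fin n)) :
    Set (Fin (numBlocks π) → PermPat) :=
  Set.Icc (etaHat π E) (Phat π)

/-- `P(η)°`: the product poset `P(η)` with its bottom element `η̂` and top element `π̂`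
removed. -/
noncomputable def PembO {n : ℕ} (π : Equiv.Perm (Fin n)) (E : Finset (Fin n)) :
    Set (Fin (numBlocks π) → PermPat) :=
  Pemb π E \ {etaHat π E, Phat π}

/-- `A^{p,π} = ⋃_{η ∈ Ê^{p,π}} P(η)°`. -/
noncomputable def Aspace (p : PermPat) {n : ℕ} (π : Equiv.Perm (Fin n)) :
    Set (Fin (numBlocks π) → PermPat) :=
  ⋃ E ∈ {E : Finset (Fin n) | EhatMem p π E}, PembO π E

/-! ## Sundry notions -/

/-- The number of descents of a permutation. -/
noncomputable def desNum {n : ℕ} (π : Equiv.Perm (Fin n)) : ℕ :=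
  (Finset.univ.filter fun j : Fin n => ∃ h : j.val + 1 < n, π ⟨j.val + 1, h⟩ < π j).card

/-- The direct sum of two permutations. -/
def dsum {a b : ℕ} (σ : Equiv.Perm (Fin a)) (τ : Equiv.Perm (Fin b)) :
    Equiv.Perm (Fin (a + b)) :=
  finSumFinEquiv.symm.trans ((Equiv.sumCongr σ τ).trans finSumFinEquiv)

/-- A permutation is indecomposable if it is nonempty and not the direct sum of two
nonempty permutations. -/
def Indecomp (p : PermPat) : Prop :=
  0 < p.1 ∧ ¬ ∃ (a b : ℕ) (σ : Equiv.Perm (Fin a)) (τ : Equiv.Perm (Fin b)),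
    0 < a ∧ 0 < b ∧ p = ⟨a + b, dsum σ τ⟩

/-- `dpow lam m = lam ⊕ ⋯ ⊕ lam` (`m` summands). -/
def dpow {l : ℕ} (lam : Equiv.Perm (Fin l)) : (m : ℕ) → Equiv.Perm (Fin (m * l))
  | 0 => (finCongr (Nat.zero_mul l).symm).permCongr 1
  | m + 1 => (finCongr (by ring : m * l + l = (m + 1) * l)).permCongr (dsum (dpow lam m) lam)

/-- Direct sum of permutations, on `PermPat`. -/
def dsumP (p q : PermPat) : PermPat := ⟨p.1 + q.1, dsum p.2 q.2⟩

/-- The direct sum of a list of permutations. -/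
def dsumList : List PermPat → PermPat
  | [] => ⟨0, 1⟩
  | p :: L => dsumP p (dsumList L)

/-- The increasing permutation `ι_n = 12⋯n`. -/
def iota (n : ℕ) : PermPat := ⟨n, 1⟩

/-! Within an adjacency of `π` the nonzero positions of a rightmost embedding form a final
segment, so on each adjacency the members of `S` are nested and one of them is largest.

If every position is nonzero in some member of `S`, then every adjacency is filled completely by
some `η ∈ S`; an element above all the `η̂` is then `π̂`, so `⋂ P(η)°` is empty and `μ = -1`.
Otherwise the blockwise largest restrictions assemble to an element `b` lying below all of
`⋂ P(η)°`: it differs from `π̂` at a position that no member uses, and from each `η̂`, because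
`b = η̂` would force every member of `S` inside `η`, while `S` has two distinct members of the same
size. So the poset is a cone and `μ = 0`. -/

section Mobius

variable {X : Type*} [PartialOrder X]

lemma muPair_self [Fintype X] (a : X) : muPair a a = 1 := by
  rw [muPair, if_pos rfl]

lemma muPair_of_lt [Fintype X] {a b : X} (h : a < b) :
    muPair a b = -∑ z ∈ Finset.univ.filter (fun z => a ≤ z ∧ z < b), muPair a z := by
  rw [muPair, if_neg h.ne, if_pos h.le, Finset.sum_attach _ (muPair a)]

lemma muPair_of_covBy [Fintype X] {a b : X} (h : a ⋖ b) : muPair a b = -1 := by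
  have hfilter : Finset.univ.filter (fun z => a ≤ z ∧ z < b) = {a} := by
    ext z
    simp only [Finset.mem_filter, Finset.mem_univ, true_and, Finset.mem_singleton]
    refine ⟨fun ⟨haz, hzb⟩ => ?_, fun hz => by subst hz; exact ⟨le_rfl, h.lt⟩⟩
    by_contra hza
    exact h.2 (lt_of_le_of_ne haz (Ne.symm hza)) hzb
  rw [muPair_of_lt h.lt, hfilter, Finset.sum_singleton, muPair_self]

lemma muPair_eq_zero_of_isLeast_Ioi [Fintype X] {a m : X} (hm : IsLeast (Set.Ioi a) m)
    {z : X} (hz : m < z) : muPair a z = 0 := by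
  obtain ⟨ham, hmin⟩ := hm
  have hcov : a ⋖ m := ⟨ham, fun c hac hcm => (hmin hac).not_gt hcm⟩
  induction z using WellFoundedLT.induction with
  | ind z ih =>
    have hsum : ∑ w ∈ Finset.univ.filter (fun w => a ≤ w ∧ w < z), muPair a w =
        muPair a a + muPair a m := by
      refine Finset.sum_eq_add_of_mem a m (by simp [ham.trans hz])
        (by simp [ham.le, hz]) ham.ne fun w hw ⟨hwa, hwm⟩ => ?_
      simp only [Finset.mem_filter, Finset.mem_univ, true_and] at hw
      exact ih w hw.2 (lt_of_le_of_ne (hmin (lt_of_le_of_ne hw.1 (Ne.symm hwa))) (Ne.symm hwm))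
    rw [muPair_of_lt (ham.trans hz), hsum, muPair_self, muPair_of_covBy hcov]
    norm_num

lemma muHat_eq_muPair [Finite X] :
    muHat X = @muPair (WithBot (WithTop X)) _ (Fintype.ofFinite _) ⊥ ⊤ := by
  rw [muHat, dif_pos ‹_›]

lemma muHat_of_isEmpty [IsEmpty X] : muHat X = -1 := by
  let _ := Fintype.ofFinite (WithBot (WithTop X))
  rw [muHat_eq_muPair]
  refine muPair_of_covBy ⟨WithBot.bot_lt_coe _, fun c hc hct => ?_⟩
  induction c using WithBot.recBotCoe with
  | bot => exact hc.ne rfl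
  | coe c =>
    induction c using WithTop.recTopCoe with
    | top => exact hct.ne rfl
    | coe x => exact isEmptyElim x

lemma muHat_eq_zero_of_isBot [Finite X] {m : X} (hm : IsBot m) : muHat X = 0 := by
  let _ := Fintype.ofFinite (WithBot (WithTop X))
  rw [muHat_eq_muPair]
  refine muPair_eq_zero_of_isLeast_Ioi (m := ((m : WithTop X) : WithBot (WithTop X)))
    ⟨WithBot.bot_lt_coe _, fun z hz => ?_⟩ (WithBot.coe_lt_coe.mpr (WithTop.coe_lt_top m))
  induction z using WithBot.recBotCoe with
  | bot => exact (lt_irrefl (⊥ : WithBot (WithTop X)) hz).elim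
  | coe z =>
    induction z using WithTop.recTopCoe with
    | top => exact le_top
    | coe x => exact WithBot.coe_le_coe.mpr (WithTop.coe_le_coe.mpr (hm x))

end Mobius

section Patterns

lemma stdize_lt_iff {m n : ℕ} (v : Fin m → Fin n) (hv : Function.Injective v) (i j : Fin m) :
    stdize v hv i < stdize v hv j ↔ v i < v j :=
  (OrderIso.lt_iff_lt _).trans Subtype.coe_lt_coe.symm

variable {n : ℕ} (π : Equiv.Perm (Fin n))

lemma patternOf_lt_iff (E : Finset (Fin n)) (i j : Fin E.card) :
    (patternOf π E).2 i < (patternOf π E).2 j ↔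
      π (E.orderIsoOfFin rfl i) < π (E.orderIsoOfFin rfl j) :=
  stdize_lt_iff _ _ i j

lemma patternOf_mono {A B : Finset (Fin n)} (h : A ⊆ B) : patternOf π A ≤ patternOf π B := by
  let a := A.orderIsoOfFin rfl
  let b := B.orderIsoOfFin rfl
  let f : Fin A.card → Fin B.card := fun i => b.symm ⟨a i, h (a i).2⟩
  have hmono : StrictMono f := fun i j hij =>
    b.symm.strictMono (Subtype.mk_lt_mk.mpr (Subtype.coe_lt_coe.mpr (a.strictMono hij)))
  refine ⟨OrderEmbedding.ofStrictMono f hmono, fun i j => (patternOf_lt_iff π A i j).trans ?_⟩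
  refine Iff.trans ?_ (patternOf_lt_iff π B (f i) (f j)).symm
  simp only [f, b, OrderIso.apply_symm_apply]
  rfl

lemma IsEmb.card_eq {p : PermPat} {E : Finset (Fin n)} (h : IsEmb p π E) : E.card = p.1 :=
  congrArg Sigma.fst h

end Patterns

lemma PermPat.finite_Iic (q : PermPat) : (Set.Iic q).Finite := by
  refine (Set.finite_range fun x : Σ m : Fin (q.1 + 1), Equiv.Perm (Fin m) =>
    (⟨x.1, x.2⟩ : PermPat)).subset fun p hp => ?_
  exact ⟨⟨⟨p.1, Nat.lt_succ_of_le (PatLe.len_le hp)⟩, p.2⟩, rfl⟩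

section Adjacencies

variable {n : ℕ} {π : Equiv.Perm (Fin n)}

variable (π) in
noncomputable def blockPart (E : Finset (Fin n)) (i : ℕ) : Finset (Fin n) :=
  E.filter fun j => blockIdx π j = i

lemma mem_blockF {i : ℕ} {j : Fin n} : j ∈ blockF π i ↔ blockIdx π j = i := by
  simp [blockF]

lemma mem_blockPart {E : Finset (Fin n)} {i : ℕ} {j : Fin n} :
    j ∈ blockPart π E i ↔ j ∈ E ∧ blockIdx π j = i :=
  Finset.mem_filter

lemma blockPart_subset_blockF (E : Finset (Fin n)) (i : ℕ) : blockPart π E i ⊆ blockF π i :=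
  fun _ hj => mem_blockF.mpr (mem_blockPart.mp hj).2

lemma blockPart_eq_blockF {E : Finset (Fin n)} {i : ℕ} (h : blockF π i ⊆ E) :
    blockPart π E i = blockF π i :=
  (blockPart_subset_blockF E i).antisymm fun _ hj => mem_blockPart.mpr ⟨h hj, mem_blockF.mp hj⟩

/-- Position `0` is never linked, so the count in `blockIdx` is positive and its `- 1` does not
truncate. -/
lemma blockIdx_lt_numBlocks (j : Fin n) : blockIdx π j < numBlocks π := by
  have h0 : (⟨0, j.pos⟩ : Fin n) ∈ Finset.univ.filter fun m : Fin n => ¬ Linked π m ∧ m ≤ j := by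
    simp only [Finset.mem_filter, Finset.mem_univ, true_and]
    exact ⟨fun h => (lt_irrefl 0) h.1, Fin.mk_le_of_le_val (Nat.zero_le _)⟩
  have hsub : (Finset.univ.filter fun m : Fin n => ¬ Linked π m ∧ m ≤ j) ⊆
      Finset.univ.filter fun m : Fin n => ¬ Linked π m := fun m hm => by
    simp only [Finset.mem_filter] at hm ⊢
    exact ⟨hm.1, hm.2.1⟩
  have := Finset.card_pos.mpr ⟨_, h0⟩
  have := Finset.card_le_card hsub
  unfold blockIdx numBlocks
  omega

lemma subset_of_forall_blockPart_subset {E F : Finset (Fin n)}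
    (h : ∀ i < numBlocks π, blockPart π F i ⊆ blockPart π E i) : F ⊆ E := fun j hj =>
  (mem_blockPart.mp (h _ (blockIdx_lt_numBlocks j) (mem_blockPart.mpr ⟨hj, rfl⟩))).1

lemma IsRightmost.blockPart_total {E F : Finset (Fin n)} (hE : IsRightmost π E)
    (hF : IsRightmost π F) (i : ℕ) :
    blockPart π E i ⊆ blockPart π F i ∨ blockPart π F i ⊆ blockPart π E i := by
  by_contra! h
  obtain ⟨a, ha, haF⟩ := Finset.not_subset.mp h.1
  obtain ⟨c, hc, hcE⟩ := Finset.not_subset.mp h.2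
  rw [mem_blockPart] at ha haF hc hcE
  rcases le_total a c with hac | hca
  · exact hcE ⟨hE a c (ha.2.trans hc.2.symm) hac ha.1, hc.2⟩
  · exact haF ⟨hF c a (hc.2.trans ha.2.symm) hca hc.1, ha.2⟩

lemma exists_forall_blockPart_subset {S : Finset (Finset (Fin n))}
    (hS : ∀ E ∈ S, IsRightmost π E) (hne : S.Nonempty) (i : ℕ) :
    ∃ E ∈ S, ∀ F ∈ S, blockPart π F i ⊆ blockPart π E i := by
  obtain ⟨E, hE, hmax⟩ := S.exists_max_image (fun E => (blockPart π E i).card) hne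
  refine ⟨E, hE, fun F hF => ?_⟩
  rcases (hS E hE).blockPart_total (hS F hF) i with h | h
  · exact (Finset.eq_of_subset_of_card_le h (hmax F hF)).ge
  · exact h

lemma exists_blockF_subset {S : Finset (Finset (Fin n))} (hS : ∀ E ∈ S, IsRightmost π E)
    (hne : S.Nonempty) (hcover : ∀ j, ∃ E ∈ S, j ∈ E) (i : ℕ) : ∃ E ∈ S, blockF π i ⊆ E := by
  rcases (blockF π i).eq_empty_or_nonempty with hempty | hblock
  · obtain ⟨E, hE⟩ := hne
    exact ⟨E, hE, hempty ▸ Finset.empty_subset E⟩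
  obtain ⟨E, hE, hfirst⟩ := hcover ((blockF π i).min' hblock)
  refine ⟨E, hE, fun j hj => hS E hE _ j ?_ ((blockF π i).min'_le j hj) hfirst⟩
  rw [mem_blockF.mp hj, mem_blockF.mp ((blockF π i).min'_mem hblock)]

end Adjacencies

section Intersection

variable {n : ℕ} {π : Equiv.Perm (Fin n)} {S : Finset (Finset (Fin n))}

lemma etaHat_apply (E : Finset (Fin n)) (i : Fin (numBlocks π)) :
    etaHat π E i = patternOf π (blockPart π E i) := rfl

lemma etaHat_le_Phat (E : Finset (Fin n)) : etaHat π E ≤ Phat π := fun i =>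
  patternOf_mono π (blockPart_subset_blockF E i)

lemma mem_iInter_PembO {z : Fin (numBlocks π) → PermPat} :
    z ∈ ⋂ E ∈ S, PembO π E ↔ ∀ E ∈ S, etaHat π E < z ∧ z < Phat π := by
  simp [PembO, Pemb]

lemma finite_iInter_PembO (hne : S.Nonempty) : (⋂ E ∈ S, PembO π E).Finite := by
  obtain ⟨E, hE⟩ := hne
  refine (Set.Finite.pi fun i => PermPat.finite_Iic (Phat π i)).subset fun z hz => ?_
  exact Set.mem_univ_pi.mpr (mem_iInter_PembO.mp hz E hE).2.le

lemma iInter_PembO_eq_empty (hS : ∀ E ∈ S, IsRightmost π E) (hne : S.Nonempty)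
    (hcover : ∀ j, ∃ E ∈ S, j ∈ E) : ⋂ E ∈ S, PembO π E = ∅ := by
  refine Set.eq_empty_of_forall_notMem fun z hz => ?_
  rw [mem_iInter_PembO] at hz
  obtain ⟨E₀, hE₀⟩ := hne
  refine (hz E₀ hE₀).2.not_ge fun i => ?_
  obtain ⟨E, hE, hblock⟩ := exists_blockF_subset hS ⟨E₀, hE₀⟩ hcover i
  have : etaHat π E i = Phat π i := by rw [etaHat_apply, blockPart_eq_blockF hblock]; rfl
  exact this ▸ (hz E hE).1.le i

lemma exists_isBot_iInter_PembO {p : PermPat} (hS : ∀ E ∈ S, EhatMem p π E)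
    (hcard : 1 < S.card) {j₀ : Fin n} (hj₀ : ∀ E ∈ S, j₀ ∉ E) :
    ∃ b : ↥(⋂ E ∈ S, PembO π E), IsBot b := by
  have hne : S.Nonempty := Finset.card_pos.mp (by omega)
  choose Emax hEmaxS hEmax using exists_forall_blockPart_subset (fun E hE => (hS E hE).2) hne
  let b : Fin (numBlocks π) → PermPat := fun i => etaHat π (Emax i) i
  have hle : ∀ E ∈ S, etaHat π E ≤ b := fun E hE i => patternOf_mono π (hEmax i E hE)
  have hb_le : b ≤ Phat π := fun i => etaHat_le_Phat (Emax i) i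
  have hb_ne_Phat : b ≠ Phat π := by
    intro h
    let i : Fin (numBlocks π) := ⟨blockIdx π j₀, blockIdx_lt_numBlocks j₀⟩
    have hlt : (blockPart π (Emax i) i).card < (blockF π i).card :=
      Finset.card_lt_card ⟨blockPart_subset_blockF _ _, fun hsub =>
        hj₀ _ (hEmaxS i) (mem_blockPart.mp (hsub (mem_blockF.mpr rfl))).1⟩
    exact hlt.ne (congrArg Sigma.fst (congrFun h i))
  have hb_ne_etaHat : ∀ E ∈ S, b ≠ etaHat π E := by
    intro E hE h
    have hsub : ∀ F ∈ S, F ⊆ E := fun F hF => subset_of_forall_blockPart_subset fun i hi =>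
      (hEmax i F hF).trans (Finset.eq_of_subset_of_card_le (hEmax i E hE)
        (congrArg Sigma.fst (congrFun h ⟨i, hi⟩)).le).superset
    have heq : ∀ F ∈ S, F = E := fun F hF => Finset.eq_of_subset_of_card_le (hsub F hF)
      (by rw [(hS E hE).1.card_eq, (hS F hF).1.card_eq])
    exact hcard.not_ge (Finset.card_le_one.mpr fun F hF G hG => (heq F hF).trans (heq G hG).symm)
  have hb : b ∈ ⋂ E ∈ S, PembO π E := mem_iInter_PembO.mpr fun E hE =>
    ⟨(hle E hE).lt_of_ne (hb_ne_etaHat E hE).symm, hb_le.lt_of_ne hb_ne_Phat⟩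
  exact ⟨⟨b, hb⟩, fun z i => (mem_iInter_PembO.mp z.2 _ (hEmaxS i)).1.le i⟩

end Intersection

theorem mobius_intersection_general {k n : ℕ} (σ : Equiv.Perm (Fin k)) (π : Equiv.Perm (Fin n))
    (S : Finset (Finset (Fin n))) (hS : ∀ E ∈ S, EhatMem ⟨k, σ⟩ π E) (hcard : 1 < S.card) :
    muHat ↥(⋂ E ∈ S, PembO π E) = if EZmem ⟨k, σ⟩ π S then -1 else 0 := by
  have hne : S.Nonempty := Finset.card_pos.mp (by omega)
  split_ifs with hEZ
  · rw [iInter_PembO_eq_empty (fun E hE => (hS E hE).2) hne hEZ.2.2]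
    exact muHat_of_isEmpty
  · obtain ⟨j₀, hj₀⟩ : ∃ j, ∀ E ∈ S, j ∉ E := by
      by_contra! hcover
      exact hEZ ⟨hne, hS, hcover⟩
    have := (finite_iInter_PembO (π := π) hne).to_subtype
    obtain ⟨b, hb⟩ := exists_isBot_iInter_PembO hS hcard hj₀
    exact muHat_eq_zero_of_isBot hb

/-- For `σ < π` and `S ⊆ Ê^{σ,π}` with `|S| > 1`, the Möbius function of
the finite poset `⋂_{η ∈ S} P(η)°` is `−1` if `S ∈ EZ^{σ,π}` and `0` otherwise. -/
theorem mobius_intersection {k n : ℕ} (σ : Equiv.Perm (Fin k)) (π : Equiv.Perm (Fin n))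
    (hle : PatLe ⟨k, σ⟩ ⟨n, π⟩) (hne : (⟨k, σ⟩ : PermPat) ≠ ⟨n, π⟩)
    (S : Finset (Finset (Fin n))) (hS : ∀ E ∈ S, EhatMem ⟨k, σ⟩ π E) (hcard : 1 < S.card) :
    muHat ↥(⋂ E ∈ S, PembO π E) = if EZmem ⟨k, σ⟩ π S then -1 else 0 :=
  mobius_intersection_general σ π S hS hcard
end

section
/- Let λ ≤ π be permutations and let π̂ = (π̂_1,…,π̂_t) be the adjacency decomposition of π. For any two embeddings η and ψ of λ in π and any index 1 ≤ i ≤ t, the permutations η̂_i and ψ̂_i are comparable in the permutation pattern poset; hence for any set S of embeddings of λ in π, {η̂_i : η ∈ S} is a chain. -/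
open scoped Classical

set_option maxHeartbeats 1000000

/-!
Inside an adjacency of `π` consecutive letters differ by one in value, so the run cannot change
direction without repeating a value: `π` is strictly monotone or strictly antitone on each
adjacency. The letters of `π` at any set of positions inside the `i`-th adjacency therefore form
the increasing (resp. decreasing) permutation of that size, and two such patterns are comparable,
the shorter one being contained in the longer.
-/

open Order in
theorem strictMonoOn_or_strictAntiOn_of_covBy {α β : Type*} [LinearOrder α] [SuccOrder α]
    [IsSuccArchimedean α] [LinearOrder β] {f : α → β} {s : Set α} (hs : s.OrdConnected)
    (hne : ∀ a ∈ s, ∀ b ∈ s, a ⋖ b → f a ≠ f b)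
    (hturn : ∀ a ∈ s, ∀ c ∈ s, ∀ b, a ⋖ b → b ⋖ c → (f a < f b ↔ f b < f c)) :
    StrictMonoOn f s ∨ StrictAntiOn f s := by
  set t := {a | a ∈ s ∧ ¬IsMax a ∧ succ a ∈ s}
  have ht : t.OrdConnected := ⟨fun x hx y hy c hc =>
    ⟨hs.out hx.1 hy.1 hc, fun hmax => hy.2.1 (hmax.mono hc.2),
      hs.out hx.1 hy.2.2 ⟨hc.1.trans (le_succ c), succ_le_succ hc.2⟩⟩⟩
  -- As a `Prop`-valued map, `up` is both monotone and antitone on `t`, hence constant there.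
  let up (a : α) : Prop := f a < f (succ a)
  have hstep : ∀ a, ¬IsMax a → a ∈ t → succ a ∈ t → (up a ↔ up (succ a)) :=
    fun a ha hat hsat => hturn a hat.1 _ hsat.2.2 _ (covBy_succ_of_not_isMax ha)
      (covBy_succ_of_not_isMax hsat.2.1)
  have hmono : MonotoneOn up t :=
    monotoneOn_of_le_succ ht fun a ha hat hsat => (hstep a ha hat hsat).1
  have hanti : AntitoneOn up t :=
    antitoneOn_of_succ_le ht fun a ha hat hsat => (hstep a ha hat hsat).2
  have hconst : ∀ a ∈ t, ∀ b ∈ t, up a → up b := fun a hat b hbt =>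
    (le_total a b).elim (hmono hat hbt) (hanti hbt hat)
  by_cases hup : ∃ a ∈ t, up a
  · obtain ⟨a, hat, ha⟩ := hup
    exact .inl <| strictMonoOn_of_lt_succ hs fun b hb hbs hsb =>
      hconst a hat b ⟨hbs, hb, hsb⟩ ha
  · push Not at hup
    refine .inr <| strictAntiOn_of_succ_lt hs fun b hb hbs hsb => ?_
    exact ((hne b hbs _ hsb (covBy_succ_of_not_isMax hb)).lt_or_gt).resolve_left
      (hup b ⟨hbs, hb, hsb⟩)

section Adjacency

variable {n : ℕ} (π : Equiv.Perm (Fin n))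

lemma Linked.val_adjacent_of_covBy {a b : Fin n} (hab : a ⋖ b) (hb : Linked π b) :
    (π b).val + 1 = (π a).val ∨ (π a).val + 1 = (π b).val := by
  have hval : a.val + 1 = b.val := Nat.covBy_iff_add_one_eq.mp (Fin.covBy_iff.mp hab)
  have hprev : prevPos b = a := Fin.ext (by simp only [prevPos]; omega)
  simpa only [hprev] using hb.2

lemma blockIdx_mono : Monotone (blockIdx π) := fun a b hab =>
  Nat.sub_le_sub_right (Finset.card_le_card fun m hm => by
    simp only [Finset.mem_filter, Finset.mem_univ, true_and] at hm ⊢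
    exact ⟨hm.1, hm.2.trans hab⟩) 1

lemma blockIdx_lt_of_not_linked {a b : Fin n} (hab : a < b) (hb : ¬ Linked π b) :
    blockIdx π a < blockIdx π b := by
  set Sa := Finset.univ.filter fun m : Fin n => ¬ Linked π m ∧ m ≤ a
  set Sb := Finset.univ.filter fun m : Fin n => ¬ Linked π m ∧ m ≤ b
  have hzero : (⟨0, Fin.pos a⟩ : Fin n) ∈ Sa := by
    simp only [Sa, Finset.mem_filter, Finset.mem_univ, true_and]
    exact ⟨fun h => h.1.false, Nat.zero_le _⟩
  have hsub : Sa ⊆ Sb := fun m hm => by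
    simp only [Sa, Sb, Finset.mem_filter, Finset.mem_univ, true_and] at hm ⊢
    exact ⟨hm.1, hm.2.trans hab.le⟩
  have hssub : Sa ⊂ Sb := (Finset.ssubset_iff_of_subset hsub).mpr
    ⟨b, by simp [Sb, hb], by simp [Sa, hab.not_ge]⟩
  have := Finset.card_lt_card hssub
  have := Finset.card_pos.mpr ⟨_, hzero⟩
  show Sa.card - 1 < Sb.card - 1
  omega

lemma ordConnected_blockF (i : ℕ) : (blockF π i : Set (Fin n)).OrdConnected := by
  have : (blockF π i : Set (Fin n)) = blockIdx π ⁻¹' {i} := by ext; simp [blockF]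
  rw [this]
  exact Set.ordConnected_singleton.preimage_mono (blockIdx_mono π)

lemma strictMonoOn_or_strictAntiOn_blockF (i : ℕ) :
    StrictMonoOn π (blockF π i) ∨ StrictAntiOn π (blockF π i) := by
  have hlinked : ∀ a ∈ blockF π i, ∀ b ∈ blockF π i, a < b → Linked π b := by
    intro a ha b hb hab
    by_contra hl
    simp only [blockF, Finset.mem_filter] at ha hb
    exact (blockIdx_lt_of_not_linked π hab hl).ne (ha.2.trans hb.2.symm)
  refine strictMonoOn_or_strictAntiOn_of_covBy (ordConnected_blockF π i)
    (fun a _ b _ hab => π.injective.ne hab.ne) fun a ha c hc b hab hbc => ?_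
  have hb : b ∈ (blockF π i : Set (Fin n)) :=
    (ordConnected_blockF π i).out ha hc ⟨hab.le, hbc.le⟩
  have hab' := (hlinked a ha b hb hab.lt).val_adjacent_of_covBy π hab
  have hbc' := (hlinked b hb c hc hbc.lt).val_adjacent_of_covBy π hbc
  have hac : (π a).val ≠ (π c).val :=
    Fin.val_ne_of_ne (π.injective.ne (hab.lt.trans hbc.lt).ne)
  rw [Fin.lt_def, Fin.lt_def]
  omega

end Adjacency

lemma stdize_lt_stdize_iff {m n : ℕ} {v : Fin m → Fin n} (hv : Function.Injective v)
    (i j : Fin m) : stdize v hv i < stdize v hv j ↔ v i < v j := by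
  simp only [stdize, OrderIso.toEquiv_symm, Equiv.trans_apply, Equiv.ofInjective_apply,
    OrderIso.coe_symm_toEquiv, OrderIso.lt_iff_lt]
  exact Iff.rfl

lemma patternOf_lt_patternOf_iff {n : ℕ} (π : Equiv.Perm (Fin n)) (E : Finset (Fin n))
    (x y : Fin E.card) :
    (patternOf π E).2 x < (patternOf π E).2 y ↔
      π (E.orderEmbOfFin rfl x) < π (E.orderEmbOfFin rfl y) := by
  simp only [patternOf, Finset.coe_orderIsoOfFin_apply]
  exact stdize_lt_stdize_iff _ x y

lemma patLe_patternOf_of_card_le {n : ℕ} {π : Equiv.Perm (Fin n)} {s : Set (Fin n)}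
    (hπ : StrictMonoOn π s ∨ StrictAntiOn π s) {A B : Finset (Fin n)} (hA : ↑A ⊆ s)
    (hB : ↑B ⊆ s) (hAB : A.card ≤ B.card) : PatLe (patternOf π A) (patternOf π B) := by
  refine ⟨Fin.castLEOrderEmb hAB, fun (x y : Fin A.card) =>
    (patternOf_lt_patternOf_iff π A x y).trans (.trans ?_
      (patternOf_lt_patternOf_iff π B (Fin.castLE hAB x) (Fin.castLE hAB y)).symm)⟩
  have hAmem : ∀ z, A.orderEmbOfFin rfl z ∈ s := fun z => hA (A.orderEmbOfFin_mem rfl z)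
  have hBmem : ∀ z, B.orderEmbOfFin rfl z ∈ s := fun z => hB (B.orderEmbOfFin_mem rfl z)
  rcases hπ with hπ | hπ
  · rw [hπ.lt_iff_lt (hAmem x) (hAmem y), hπ.lt_iff_lt (hBmem _) (hBmem _)]
    simp
  · rw [hπ.lt_iff_gt (hAmem x) (hAmem y), hπ.lt_iff_gt (hBmem _) (hBmem _)]
    simp

lemma etaHat_le_or_le {n : ℕ} (π : Equiv.Perm (Fin n)) (E F : Finset (Fin n))
    (i : Fin (numBlocks π)) :
    PatLe (etaHat π E i) (etaHat π F i) ∨ PatLe (etaHat π F i) (etaHat π E i) := by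
  have hsub : ∀ G : Finset (Fin n),
      ↑(G.filter fun j => blockIdx π j = i.val) ⊆ (blockF π i : Set (Fin n)) := fun G =>
    Finset.coe_subset.mpr (Finset.filter_subset_filter _ G.subset_univ)
  have hπ := strictMonoOn_or_strictAntiOn_blockF π i
  exact (le_total _ _).imp (patLe_patternOf_of_card_le hπ (hsub E) (hsub F))
    (patLe_patternOf_of_card_le hπ (hsub F) (hsub E))

theorem etaHat_comparable_general {k n : ℕ} (lam : Equiv.Perm (Fin k)) (π : Equiv.Perm (Fin n)) :
    (∀ E F : Finset (Fin n), IsEmb ⟨k, lam⟩ π E → IsEmb ⟨k, lam⟩ π F →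
      ∀ i : Fin (numBlocks π),
        PatLe (etaHat π E i) (etaHat π F i) ∨ PatLe (etaHat π F i) (etaHat π E i)) ∧
    (∀ S : Set (Finset (Fin n)), (∀ E ∈ S, IsEmb ⟨k, lam⟩ π E) →
      ∀ i : Fin (numBlocks π),
        IsChain (· ≤ ·) {q : PermPat | ∃ E ∈ S, q = etaHat π E i}) := by
  refine ⟨fun E F _ _ i => etaHat_le_or_le π E F i, fun S _ i => ?_⟩
  rintro _ ⟨E, -, rfl⟩ _ ⟨F, -, rfl⟩ -
  exact etaHat_le_or_le π E F i

/-- For any two embeddings `η, ψ` of `λ` in `π` and any adjacency index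
`i`, the permutations `η̂_i` and `ψ̂_i` are comparable in the pattern poset; hence for any
set `S` of embeddings of `λ` in `π` the set `{η̂_i : η ∈ S}` is a chain. -/
theorem etaHat_comparable {k n : ℕ} (lam : Equiv.Perm (Fin k)) (π : Equiv.Perm (Fin n))
    (hle : PatLe ⟨k, lam⟩ ⟨n, π⟩) :
    (∀ E F : Finset (Fin n), IsEmb ⟨k, lam⟩ π E → IsEmb ⟨k, lam⟩ π F →
      ∀ i : Fin (numBlocks π),
        PatLe (etaHat π E i) (etaHat π F i) ∨ PatLe (etaHat π F i) (etaHat π E i)) ∧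
    (∀ S : Set (Finset (Fin n)), (∀ E ∈ S, IsEmb ⟨k, lam⟩ π E) →
      ∀ i : Fin (numBlocks π),
        IsChain (· ≤ ·) {q : PermPat | ∃ E ∈ S, q = etaHat π E i}) :=
  etaHat_comparable_general lam π
end
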